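/- Let R be a δ-reversible ring in which every idempotent lifts modulo δ(R), i.e., for every f ∈ R with f² − f ∈ δ(R) there exists e ∈ R with e² = e and e − f ∈ δ(R). Then the quotient R/δ(R) is abelian; equivalently, for every f ∈ R with f² − f ∈ δ(R) and every x ∈ R, one has fx − xf ∈ δ(R). -/

import Mathlib

/-!
The preimage of an essential maximal right ideal under a right-linear endomorphism of `R`
(such as left multiplication by `x`) is again essential, and either maximal or all of `R`;
hence `δ(R)` is stable under such maps and is a two-sided ideal. For an idempotent `e`,
`(1 - e) * (e * x) = 0` and `e * ((1 - e) * x) = 0`, so δ-reversibility puts `e x (1 - e)` and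
`(1 - e) x e` in `δ(R)`; their difference is `e x - x e`. If `e` lifts `f`, then
`f x - x f ≡ e x - x e` modulo `δ(R)`.
-/

/-- A right ideal `I` of `R` (a submodule of `R` as a right `R`-module, i.e. an
`Rᵐᵒᵖ`-submodule) is essential if every right ideal meeting it trivially is trivial. -/
def IsEssentialRightIdeal (R : Type*) [Ring R] (I : Submodule Rᵐᵒᵖ R) : Prop :=
  ∀ K : Submodule Rᵐᵒᵖ R, K ⊓ I = ⊥ → K = ⊥

/-- The Zhou radical `δ(R)`: the intersection of all essential maximal right ideals of `R`
(the whole ring if there are no essential maximal right ideals). -/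
def zhouRadical (R : Type*) [Ring R] : Set R :=
  ⋂₀ { S : Set R | ∃ I : Submodule Rᵐᵒᵖ R, IsCoatom I ∧ IsEssentialRightIdeal R I ∧ S = ↑I }

/-- A ring `R` is `δ`-reversible if `a * b = 0` implies `b * a ∈ δ(R)`. -/
def IsDeltaReversible (R : Type*) [Ring R] : Prop :=
  ∀ a b : R, a * b = 0 → b * a ∈ zhouRadical R

section

variable {R : Type*} [Ring R]

theorem mem_zhouRadical_iff {a : R} :
    a ∈ zhouRadical R ↔
      ∀ I : Submodule Rᵐᵒᵖ R, IsCoatom I → IsEssentialRightIdeal R I → a ∈ I :=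
  ⟨fun ha I hI hIess ↦ ha I ⟨I, hI, hIess, rfl⟩,
    by rintro ha _ ⟨I, hI, hIess, rfl⟩; exact ha I hI hIess⟩

theorem IsEssentialRightIdeal.comap {I : Submodule Rᵐᵒᵖ R} (hI : IsEssentialRightIdeal R I)
    (f : R →ₗ[Rᵐᵒᵖ] R) : IsEssentialRightIdeal R (I.comap f) := by
  intro K hK
  have hmap : K.map f = ⊥ :=
    hI _ (by rw [Submodule.map_inf_eq_map_inf_comap, hK, Submodule.map_bot])
  have hker : K ≤ I.comap f :=
    (LinearMap.le_ker_iff_map.mpr hmap).trans (LinearMap.ker_le_comap f)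
  rwa [inf_eq_left.mpr hker] at hK

theorem map_mem_zhouRadical (f : R →ₗ[Rᵐᵒᵖ] R) {a : R} (ha : a ∈ zhouRadical R) :
    f a ∈ zhouRadical R := by
  rw [mem_zhouRadical_iff] at ha ⊢
  intro I hI hIess
  rcases Submodule.isCoatom_comap_or_eq_top f hI with hcoatom | htop
  · exact ha _ hcoatom (hIess.comap f)
  · exact Submodule.mem_comap.mp (htop ▸ Submodule.mem_top)

def zhouIdeal (R : Type*) [Ring R] : TwoSidedIdeal R :=
  .mk' (zhouRadical R)
    (mem_zhouRadical_iff.mpr fun I _ _ ↦ I.zero_mem)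
    (fun ha hb ↦ mem_zhouRadical_iff.mpr fun I hI hIess ↦
      I.add_mem (mem_zhouRadical_iff.mp ha I hI hIess) (mem_zhouRadical_iff.mp hb I hI hIess))
    (fun ha ↦ mem_zhouRadical_iff.mpr fun I hI hIess ↦
      I.neg_mem (mem_zhouRadical_iff.mp ha I hI hIess))
    (fun {x _} ha ↦ map_mem_zhouRadical (DistribSMul.toLinearMap Rᵐᵒᵖ R x) ha)
    (fun {_ x} ha ↦ mem_zhouRadical_iff.mpr fun I hI hIess ↦
      I.smul_mem (MulOpposite.op x) (mem_zhouRadical_iff.mp ha I hI hIess))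

@[simp]
theorem mem_zhouIdeal {a : R} : a ∈ zhouIdeal R ↔ a ∈ zhouRadical R :=
  TwoSidedIdeal.mem_mk' ..

theorem IsDeltaReversible.mul_sub_mul_mem_of_isIdempotentElem (hrev : IsDeltaReversible R)
    {e : R} (he : IsIdempotentElem e) (x : R) : e * x - x * e ∈ zhouRadical R := by
  have hcompl : (1 - e) * e = 0 := by rw [sub_mul, one_mul, he.eq, sub_self]
  have hcompl' : e * (1 - e) = 0 := by rw [mul_sub, mul_one, he.eq, sub_self]
  have h₁ : e * x * (1 - e) ∈ zhouRadical R := hrev _ _ (by rw [← mul_assoc, hcompl, zero_mul])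
  have h₂ : (1 - e) * x * e ∈ zhouRadical R := hrev _ _ (by rw [← mul_assoc, hcompl', zero_mul])
  have hsplit : e * x - x * e = e * x * (1 - e) - (1 - e) * x * e := by noncomm_ring
  rw [hsplit]
  rw [← mem_zhouIdeal] at h₁ h₂ ⊢
  exact sub_mem h₁ h₂

end

/-- If `R` is δ-reversible and idempotents lift modulo `δ(R)`, then `R/δ(R)` is abelian:
every element that is idempotent modulo `δ(R)` commutes with everything modulo `δ(R)`. -/
theorem quotient_abelian_of_deltaReversible_of_lift (R : Type*) [Ring R]
    (hrev : IsDeltaReversible R)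
    (hlift : ∀ f : R, f * f - f ∈ zhouRadical R →
      ∃ e : R, e * e = e ∧ e - f ∈ zhouRadical R) :
    ∀ f x : R, f * f - f ∈ zhouRadical R → f * x - x * f ∈ zhouRadical R := by
  intro f x hf
  obtain ⟨e, he, hef⟩ := hlift f hf
  have hcomm := hrev.mul_sub_mul_mem_of_isIdempotentElem he x
  have hsplit : f * x - x * f = (e * x - x * e) - (e - f) * x + x * (e - f) := by noncomm_ring
  rw [hsplit]
  rw [← mem_zhouIdeal] at hcomm hef ⊢
  exact add_mem (sub_mem hcomm ((zhouIdeal R).mul_mem_right _ _ hef))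
    ((zhouIdeal R).mul_mem_left _ _ hef)
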